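/- Let μ ≥ 2 be an integer and m = 2^μ − 1. Define σ_{S,m} := t + Σ_{k≥1} t^{e_k} ∈ F₂[[t]], where e_k = ((m+1)/(m−1))·(m·((m+1)/2)^{k−1} − 1) (these exponents are integers; equivalently, the support of σ_{S,m} consists of 1 together with the integers whose binary expansion is 1 0^{μ−1} (1 0^{μ−2})^ℓ 0 for some ℓ ≥ 0). Then σ_{S,m} ∈ 𝒩(F₂) has compositional order 2 and depth m, it is 1-sparse, and every element of 𝒩(F₂) of compositional order 2 and depth m is conjugate in 𝒩(F₂) to σ_{S,m}. -/

import Mathlib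

/-!
Composition makes the series `t + O(t²)` a group, and in characteristic `2` any two involutions
`σ ≡ τ ≡ t + t^(2^μ) mod t^(2^μ+1)` in it are conjugate by successive approximation. Suppose
`σ ≡ τ mod t^N` with `N > 2^μ` and put `d = σ - τ`. Subtracting the two involution equations
gives `d ∘ τ - d = s ∘ τ - s ∘ σ` with `s = σ - t`, and this is `0 mod t^(N+2^μ)` because `s`
starts in degree `2^μ` and `(τ - σ)^(2^μ)` is a Frobenius power. On the other hand
`d ∘ τ - d ≡ N d_N t^(N+2^μ-1)`. For odd `N` this forces `d_N = 0`; for even `N`, conjugating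
`σ` by `t + d_N t^(N-2^μ+1)` kills `d_N`. The conjugators converge `t`-adically.

For `σ_{S,m} = t + S`, with `q = 2^(μ-1)`, the tail satisfies `S = t^(2q) + (tS)^q`. Both `S ∘ σ`
and `S` solve `T = σ^(2q) + (σT)^q`, whose solution is unique, so `σ ∘ σ = σ + S = t`. The
exponents of `S` grow at least like `2^j`, which gives sparseness.
-/

open PowerSeries

abbrev F2 := ZMod 2

/-- Composition of power series `σ ∘ τ` (substitution of `τ` into `σ`), valid when
`τ` has zero constant coefficient. -/
noncomputable def ngComp (σ τ : PowerSeries F2) : PowerSeries F2 :=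
  PowerSeries.mk fun k =>
    ∑ n ∈ Finset.range (k + 1), PowerSeries.coeff (R := F2) n σ * PowerSeries.coeff (R := F2) k (τ ^ n)

/-- `ngIter σ n = σ^{∘n}`, the `n`-fold compositional iterate. -/
noncomputable def ngIter (σ : PowerSeries F2) : ℕ → PowerSeries F2
  | 0 => PowerSeries.X
  | n + 1 => ngComp σ (ngIter σ n)

/-- Membership in the Nottingham group: `σ ≡ t (mod t²)`. -/
def IsNott (σ : PowerSeries F2) : Prop :=
  PowerSeries.coeff (R := F2) 0 σ = 0 ∧ PowerSeries.coeff (R := F2) 1 σ = 1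

/-- `σ` has compositional order `n`. -/
def NGOrder (σ : PowerSeries F2) (n : ℕ) : Prop :=
  ngIter σ n = PowerSeries.X ∧ ∀ m : ℕ, 0 < m → m < n → ngIter σ m ≠ PowerSeries.X

/-- `σ` has depth `m`, i.e. `ord_t (σ - t) = m + 1`. -/
def HasDepth (σ : PowerSeries F2) (m : ℕ) : Prop :=
  (∀ i < m + 1, PowerSeries.coeff (R := F2) i (σ - PowerSeries.X) = 0) ∧
    PowerSeries.coeff (R := F2) (m + 1) (σ - PowerSeries.X) ≠ 0

/-- Conjugacy in the Nottingham group. -/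
def NGConj (σ τ : PowerSeries F2) : Prop :=
  ∃ ψ : PowerSeries F2, IsNott ψ ∧ ngComp σ ψ = ngComp ψ τ

/-- `σ` is `r`-sparse: the number of nonzero coefficients among the first `N` grows
like `O((log N)^r)`. -/
def IsSparse (r : ℕ) (σ : PowerSeries F2) : Prop :=
  ∃ C : ℝ, 0 < C ∧ ∀ N : ℕ, 2 ≤ N →
    (((Finset.range (N + 1)).filter fun k => PowerSeries.coeff (R := F2) k σ ≠ 0).card : ℝ) ≤
      C * Real.log N ^ r

/- The series `σ_{S,m} = t + Σ_{k≥1} t^{e_k}`, with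
`e_k = ((m+1)/(m−1))·(m·((m+1)/2)^{k−1} − 1)` (computed in `ℚ`). -/
open Classical in
noncomputable def sigmaSm (m : ℕ) : PowerSeries F2 :=
  PowerSeries.mk fun n =>
    if n = 1 ∨ ∃ k : ℕ, 1 ≤ k ∧
        (n : ℚ) = (((m : ℚ) + 1) / ((m : ℚ) - 1)) *
          ((m : ℚ) * (((m : ℚ) + 1) / 2) ^ (k - 1) - 1)
    then 1 else 0

namespace PowerSeries

open Finset

variable {R : Type*} [CommRing R]

instance {p : ℕ} [CharP R p] : CharP R⟦X⟧ p :=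
  charP_of_injective_ringHom C_injective p

theorem coeff_subst_eq_sum {a : R⟦X⟧} (ha : constantCoeff a = 0) (f : R⟦X⟧) (k : ℕ) :
    coeff k (f.subst a) = ∑ n ∈ range (k + 1), coeff n f * coeff k (a ^ n) := by
  rw [coeff_subst' (HasSubst.of_constantCoeff_zero' ha)]
  refine finsum_eq_sum_of_support_subset _ fun n hn => ?_
  by_contra hnk
  refine hn ?_
  have : X ^ n ∣ a ^ n := pow_dvd_pow_of_dvd (X_dvd_iff.mpr ha) n
  simp only [smul_eq_mul, X_pow_dvd_iff.mp this k (by simpa using hnk), mul_zero]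

theorem constantCoeff_subst_of_constantCoeff_eq_zero {a : R⟦X⟧} (ha : constantCoeff a = 0)
    (f : R⟦X⟧) : constantCoeff (f.subst a) = constantCoeff f := by
  rw [← coeff_zero_eq_constantCoeff_apply, coeff_subst_eq_sum ha]
  simp

theorem X_pow_dvd_subst {a f : R⟦X⟧} (ha : constantCoeff a = 0) {N : ℕ} (hf : X ^ N ∣ f) :
    X ^ N ∣ f.subst a := by
  refine X_pow_dvd_iff.mpr fun k hk => ?_
  rw [coeff_subst_eq_sum ha]
  refine sum_eq_zero fun n hn => ?_
  rw [X_pow_dvd_iff.mp hf n (by simp at hn; omega), zero_mul]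

theorem X_pow_dvd_subst_sub_subst {a b : R⟦X⟧} (ha : constantCoeff a = 0)
    (hb : constantCoeff b = 0) {N : ℕ} (hab : X ^ N ∣ a - b) (f : R⟦X⟧) :
    X ^ N ∣ f.subst a - f.subst b := by
  refine X_pow_dvd_iff.mpr fun k hk => ?_
  rw [map_sub, coeff_subst_eq_sum ha, coeff_subst_eq_sum hb, ← sum_sub_distrib]
  refine sum_eq_zero fun n _ => ?_
  rw [← mul_sub, ← map_sub,
    X_pow_dvd_iff.mp (hab.trans (sub_dvd_pow_sub_pow a b n)) k hk, mul_zero]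

theorem X_pow_dvd_pow_sub_pow {a b : R⟦X⟧} (ha : constantCoeff a = 0)
    (hb : constantCoeff b = 0) {M : ℕ} (hab : X ^ M ∣ a - b) (n : ℕ) :
    X ^ (M + n) ∣ a ^ (n + 1) - b ^ (n + 1) := by
  rw [← geom_sum₂_mul, pow_add, mul_comm]
  refine mul_dvd_mul (dvd_sum fun i hi => ?_) hab
  have hi : i ≤ n := Nat.lt_succ_iff.mp (mem_range.mp hi)
  calc X ^ n = X ^ i * X ^ (n + 1 - 1 - i) := by rw [← pow_add]; congr 1; omega
    _ ∣ a ^ i * b ^ (n + 1 - 1 - i) :=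
      mul_dvd_mul (pow_dvd_pow_of_dvd (X_dvd_iff.mpr ha) _)
        (pow_dvd_pow_of_dvd (X_dvd_iff.mpr hb) _)

theorem X_pow_succ_dvd_sub_C_coeff_mul {f : R⟦X⟧} {N : ℕ} (hf : X ^ N ∣ f) :
    X ^ (N + 1) ∣ f - C (coeff N f) * X ^ N := by
  refine X_pow_dvd_iff.mpr fun k hk => ?_
  rw [map_sub, coeff_C_mul_X_pow]
  rcases Nat.lt_or_ge k N with h | h
  · rw [X_pow_dvd_iff.mp hf k h, if_neg h.ne, sub_zero]
  · rw [show k = N by omega, if_pos rfl, sub_self]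

theorem X_pow_dvd_of_X_pow_succ_dvd_sub_X_pow {f : R⟦X⟧} {p : ℕ}
    (h : X ^ (p + 1) ∣ f - X ^ p) : X ^ p ∣ f := by
  simpa using dvd_add ((pow_dvd_pow (X : R⟦X⟧) p.le_succ).trans h) (dvd_refl (X ^ p))

theorem eq_of_forall_X_pow_dvd_sub {f g : R⟦X⟧} (h : ∀ N, X ^ N ∣ f - g) : f = g := by
  ext k
  rw [← sub_eq_zero, ← map_sub]
  exact X_pow_dvd_iff.mp (h (k + 1)) k k.lt_succ_self

theorem exists_X_pow_dvd_sub_of_forall {g : ℕ → R⟦X⟧}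
    (hg : ∀ k, X ^ (k + 1) ∣ g (k + 1) - g k) : ∃ f : R⟦X⟧, ∀ k, X ^ (k + 1) ∣ f - g k := by
  have stable : ∀ j k, j ≤ k → coeff j (g k) = coeff j (g j) := by
    intro j k hjk
    induction k, hjk using Nat.le_induction with
    | base => rfl
    | succ k hjk ih =>
      rw [← ih, ← sub_eq_zero, ← map_sub]
      exact X_pow_dvd_iff.mp (hg k) j (by omega)
  refine ⟨mk fun j => coeff j (g j), fun k => X_pow_dvd_iff.mpr fun j hj => ?_⟩
  rw [map_sub, coeff_mk, stable j k (by omega), sub_self]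

theorem eq_zero_of_eq_mul_pow {a D : R⟦X⟧} (ha : X ∣ a) {q : ℕ} (hq : q ≠ 0)
    (hD : D = a * D ^ q) : D = 0 := by
  have hdvd : ∀ k, X ^ k ∣ D := by
    intro k
    induction k with
    | zero => exact one_dvd D
    | succ k ih => rw [hD, pow_succ']; exact mul_dvd_mul ha (ih.trans (dvd_pow_self D hq))
  exact eq_of_forall_X_pow_dvd_sub fun N => by simpa using hdvd N

theorem X_pow_dvd_subst_sub_sub_C_mul {d τ : R⟦X⟧} (hτ : constantCoeff τ = 0) {N p : ℕ}
    (hd : X ^ (N + 1) ∣ d) (hτX : X ^ p ∣ τ - X) :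
    X ^ (N + 1 + p) ∣ d.subst τ - d - C (coeff (N + 1) d) * (τ ^ (N + 1) - X ^ (N + 1)) := by
  obtain ⟨g, rfl⟩ := hd
  have hsub := HasSubst.of_constantCoeff_zero' hτ
  have hg : X ∣ g.subst τ - C (constantCoeff g) := by
    rw [X_dvd_iff, map_sub, constantCoeff_subst_of_constantCoeff_eq_zero hτ, constantCoeff_C,
      sub_self]
  rw [subst_mul hsub, subst_pow hsub, subst_X hsub, coeff_X_pow_mul', if_pos le_rfl,
    Nat.sub_self, coeff_zero_eq_constantCoeff_apply]
  have key : τ ^ (N + 1) * g.subst τ - X ^ (N + 1) * g -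
      C (constantCoeff g) * (τ ^ (N + 1) - X ^ (N + 1)) =
      (τ ^ (N + 1) - X ^ (N + 1)) * (g.subst τ - C (constantCoeff g)) +
        X ^ (N + 1) * (g.subst τ - g.subst X) := by
    rw [X_subst]; ring
  rw [key, show N + 1 + p = (p + N) + 1 by ring, pow_succ]
  refine dvd_add (mul_dvd_mul (X_pow_dvd_pow_sub_pow hτ constantCoeff_X hτX N) hg) ?_
  rw [← pow_succ, show p + N + 1 = N + 1 + p by ring, pow_add]
  exact mul_dvd_mul_left _ (X_pow_dvd_subst_sub_subst hτ constantCoeff_X hτX g)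

theorem X_pow_dvd_pow_sub_pow_sub_mul {τ : R⟦X⟧} (hτ : constantCoeff τ = 0) {p : ℕ}
    (hτX : X ^ p ∣ τ - X) (n : ℕ) :
    X ^ (n + 2 * p) ∣
      τ ^ (n + 2) - X ^ (n + 2) - ((n + 2 : ℕ) : R⟦X⟧) * X ^ (n + 1) * (τ - X) := by
  have hsq : X ^ (2 * p) ∣ (τ - X) ^ 2 := pow_mul' (X : R⟦X⟧) 2 p ▸ pow_dvd_pow_of_dvd hτX 2
  induction n with
  | zero =>
    convert hsq using 1
    norm_num
    ring
  | succ n ih =>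
    have key : τ ^ (n + 3) - X ^ (n + 3) - ((n + 3 : ℕ) : R⟦X⟧) * X ^ (n + 2) * (τ - X) =
        τ * (τ ^ (n + 2) - X ^ (n + 2) - ((n + 2 : ℕ) : R⟦X⟧) * X ^ (n + 1) * (τ - X)) +
          ((n + 2 : ℕ) : R⟦X⟧) * (X ^ (n + 1) * (τ - X) ^ 2) := by
      push_cast; ring
    rw [key, show n + 1 + 2 * p = (n + 2 * p) + 1 by ring, pow_succ']
    refine dvd_add (mul_dvd_mul (X_dvd_iff.mpr hτ) ih) (dvd_mul_of_dvd_right ?_ _)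
    rw [← pow_succ', show n + 2 * p + 1 = (n + 1) + 2 * p by ring, pow_add]
    exact mul_dvd_mul_left _ hsq

theorem pow_prime_pow_eq_expand {p : ℕ} [hp : Fact p.Prime] (f : (ZMod p)⟦X⟧) (n : ℕ) :
    f ^ p ^ n = expand (p ^ n) (pow_ne_zero n hp.out.ne_zero) f := by
  have hid : iterateFrobenius (ZMod p) p n = RingHom.id _ := by
    ext x; simp [iterateFrobenius_def, ZMod.pow_card_pow]
  rw [← MvPowerSeries.map_iterateFrobenius_expand p hp.out.ne_zero f n, hid,
    MvPowerSeries.map_id]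
  rfl

section CharTwo

variable [CharP R 2]

theorem X_pow_dvd_subst_sub_subst_of_X_pow_dvd {s a b : R⟦X⟧} (ha : constantCoeff a = 0)
    (hb : constantCoeff b = 0) {μ M : ℕ} (hμ : 1 ≤ μ) (hM : 2 ≤ M) (hs : X ^ 2 ^ μ ∣ s)
    (hab : X ^ M ∣ a - b) : X ^ (M + 2 ^ μ) ∣ s.subst a - s.subst b := by
  obtain ⟨g, rfl⟩ := hs
  have hsa := HasSubst.of_constantCoeff_zero' ha
  have hsb := HasSubst.of_constantCoeff_zero' hb
  rw [subst_mul hsa, subst_mul hsb, subst_pow hsa, subst_pow hsb, subst_X hsa, subst_X hsb]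
  have key : a ^ 2 ^ μ * g.subst a - b ^ 2 ^ μ * g.subst b =
      (a - b) ^ 2 ^ μ * g.subst a + b ^ 2 ^ μ * (g.subst a - g.subst b) := by
    rw [sub_pow_char_pow]; ring
  rw [key]
  refine dvd_add (dvd_mul_of_dvd_left ?_ _) ?_
  · have : M + 2 ^ μ ≤ M * 2 ^ μ := by
      have : 2 ^ 1 ≤ 2 ^ μ := Nat.pow_le_pow_right (n := 2) two_pos hμ
      nlinarith
    exact (pow_dvd_pow (X : R⟦X⟧) this).trans
      (pow_mul (X : R⟦X⟧) M (2 ^ μ) ▸ pow_dvd_pow_of_dvd hab _)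
  · rw [add_comm, pow_add]
    exact mul_dvd_mul (pow_dvd_pow_of_dvd (X_dvd_iff.mpr hb) _)
      (X_pow_dvd_subst_sub_subst ha hb hab g)

theorem X_pow_dvd_pow_sub_pow_sub_X_pow {τ : R⟦X⟧} (hτ : constantCoeff τ = 0) {p : ℕ}
    (hp : 2 ≤ p) (hτX : X ^ (p + 1) ∣ τ - X - X ^ p) {n : ℕ} (hn : Odd n) :
    X ^ (n + 2 + p) ∣ τ ^ (n + 2) - X ^ (n + 2) - X ^ (n + 1 + p) := by
  have hcast : ((n + 2 : ℕ) : R⟦X⟧) = 1 := by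
    rw [Nat.cast_succ, (CharP.cast_eq_zero_iff R⟦X⟧ 2 (n + 1)).mpr
      (even_iff_two_dvd.mp hn.add_one), zero_add]
  have key : τ ^ (n + 2) - X ^ (n + 2) - X ^ (n + 1 + p) =
      (τ ^ (n + 2) - X ^ (n + 2) - ((n + 2 : ℕ) : R⟦X⟧) * X ^ (n + 1) * (τ - X)) +
        X ^ (n + 1) * (τ - X - X ^ p) := by
    rw [hcast]; ring
  rw [key, show n + 2 + p = (n + 1) + (p + 1) by ring]
  exact dvd_add ((pow_dvd_pow (X : R⟦X⟧) (by omega)).trans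
      (X_pow_dvd_pow_sub_pow_sub_mul hτ (X_pow_dvd_of_X_pow_succ_dvd_sub_X_pow hτX) n))
    (pow_add (X : R⟦X⟧) (n + 1) (p + 1) ▸ mul_dvd_mul_left _ hτX)

end CharTwo

end PowerSeries

@[ext]
structure Nottingham (R : Type*) [CommRing R] where
  val : R⟦X⟧
  constantCoeff_val : constantCoeff val = 0
  coeff_one_val : coeff 1 val = 1

namespace Nottingham

variable {R : Type*} [CommRing R]

instance : CoeOut (Nottingham R) R⟦X⟧ := ⟨val⟩

noncomputable instance : One (Nottingham R) := ⟨⟨X, constantCoeff_X, coeff_one_X⟩⟩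

noncomputable instance : Mul (Nottingham R) where
  mul σ τ := ⟨σ.val.subst τ.val,
    by rw [← coeff_zero_eq_constantCoeff_apply, coeff_subst_eq_sum τ.constantCoeff_val]
       simp [σ.constantCoeff_val],
    by simp [coeff_subst_eq_sum τ.constantCoeff_val, Finset.sum_range_succ, σ.constantCoeff_val,
      σ.coeff_one_val, τ.coeff_one_val]⟩

theorem isUnit_coeff_one (σ : Nottingham R) : IsUnit (coeff 1 σ.val) :=
  σ.coeff_one_val ▸ isUnit_one

noncomputable instance : Inv (Nottingham R) where
  inv σ := ⟨σ.val.substInvOfIsUnit σ.isUnit_coeff_one, constantCoeff_substInvOfIsUnit _ _, by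
    rw [coeff_one_substInvOfIsUnit, Units.val_eq_one, inv_eq_one, ← Units.val_eq_one,
      IsUnit.unit_spec, σ.coeff_one_val]⟩

@[simp] theorem val_one : (1 : Nottingham R).val = X := rfl

@[simp] theorem val_mul (σ τ : Nottingham R) : (σ * τ).val = σ.val.subst τ.val := rfl

theorem hasSubst (σ : Nottingham R) : HasSubst σ.val :=
  HasSubst.of_constantCoeff_zero' σ.constantCoeff_val

noncomputable instance : Group (Nottingham R) :=
  Group.ofLeftAxioms
    (fun σ τ υ => Nottingham.ext (subst_comp_subst_apply τ.hasSubst υ.hasSubst σ.val))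
    (fun σ => Nottingham.ext (subst_X σ.hasSubst))
    (fun σ => Nottingham.ext
      (subst_substInvOfIsUnit_left σ.val σ.constantCoeff_val σ.isUnit_coeff_one))

theorem val_subst_val_of_mul_self_eq_one {σ : Nottingham R} (hσ : σ * σ = 1) :
    σ.val.subst σ.val = X :=
  congrArg val hσ

noncomputable def addMonomial (c : R) (k : ℕ) : Nottingham R :=
  ⟨X + C c * X ^ (k + 2), by simp, by simp [coeff_X_pow]⟩

theorem X_pow_dvd_addMonomial_sub_X (c : R) (k : ℕ) :
    X ^ (k + 2) ∣ (addMonomial c k).val - X := by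
  simp [addMonomial]

theorem X_pow_dvd_val_sub_X_of_X_pow_dvd_val_sub_val {μ : ℕ} {σ τ : Nottingham R}
    (hτX : X ^ (2 ^ μ + 1) ∣ τ.val - X - X ^ 2 ^ μ) {N : ℕ} (hN : 2 ^ μ ≤ N)
    (hστ : X ^ N ∣ σ.val - τ.val) : X ^ 2 ^ μ ∣ σ.val - X := by
  rw [show σ.val - X = (σ.val - τ.val) + (τ.val - X) by ring]
  exact dvd_add ((pow_dvd_pow _ hN).trans hστ) (X_pow_dvd_of_X_pow_succ_dvd_sub_X_pow hτX)

variable [CharP R 2] {μ : ℕ}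

theorem X_pow_succ_dvd_val_sub_val_of_odd (hμ : 1 ≤ μ) {σ τ : Nottingham R}
    (hσ : σ * σ = 1) (hτ : τ * τ = 1) (hτX : X ^ (2 ^ μ + 1) ∣ τ.val - X - X ^ 2 ^ μ) {n : ℕ}
    (hn : Odd n) (hnμ : 2 ^ μ ≤ n + 1) (hστ : X ^ (n + 2) ∣ σ.val - τ.val) :
    X ^ (n + 3) ∣ σ.val - τ.val := by
  have hinv : (σ.val - τ.val).subst τ.val - (σ.val - τ.val) =
      (σ.val - X).subst τ.val - (σ.val - X).subst σ.val := by
    simp only [subst_sub τ.hasSubst, subst_sub σ.hasSubst, subst_X τ.hasSubst,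
      subst_X σ.hasSubst, val_subst_val_of_mul_self_eq_one hσ,
      val_subst_val_of_mul_self_eq_one hτ]
    linear_combination (τ.val - σ.val) * (CharTwo.two_eq_zero : (2 : R⟦X⟧) = 0)
  have hfrob : X ^ (n + 2 + 2 ^ μ) ∣ (σ.val - X).subst τ.val - (σ.val - X).subst σ.val :=
    X_pow_dvd_subst_sub_subst_of_X_pow_dvd τ.constantCoeff_val σ.constantCoeff_val hμ
      (by omega) (X_pow_dvd_val_sub_X_of_X_pow_dvd_val_sub_val hτX (by omega) hστ)
      (dvd_sub_comm.mp hστ)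
  have hlin : X ^ (n + 2 + 2 ^ μ) ∣ (σ.val - τ.val).subst τ.val - (σ.val - τ.val) -
      C (coeff (n + 2) (σ.val - τ.val)) * (τ.val ^ (n + 2) - X ^ (n + 2)) :=
    X_pow_dvd_subst_sub_sub_C_mul τ.constantCoeff_val hστ
      (X_pow_dvd_of_X_pow_succ_dvd_sub_X_pow hτX)
  have hpow := X_pow_dvd_pow_sub_pow_sub_X_pow τ.constantCoeff_val
    (Nat.pow_le_pow_right (n := 2) two_pos hμ) hτX hn
  set c := coeff (n + 2) (σ.val - τ.val) with hc_def
  have hc : X ^ (n + 1 + 2 ^ μ + 1) ∣ C c * X ^ (n + 1 + 2 ^ μ) := by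
    convert dvd_sub (dvd_sub (hinv ▸ hfrob) hlin) (dvd_mul_of_dvd_right hpow (C c)) using 2
      <;> ring
  have hc0 : c = 0 := by simpa using X_pow_dvd_iff.mp hc _ (Nat.lt_succ_self _)
  have := X_pow_succ_dvd_sub_C_coeff_mul hστ
  rwa [← hc_def, hc0, map_zero, zero_mul, sub_zero] at this

theorem X_pow_dvd_val_mul_addMonomial_sub (hμ : 1 ≤ μ) {σ τ : Nottingham R}
    (hτX : X ^ (2 ^ μ + 1) ∣ τ.val - X - X ^ 2 ^ μ) {k : ℕ} (hk : Odd k)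
    (hστ : X ^ (2 ^ μ + 1 + k) ∣ σ.val - τ.val) :
    X ^ (2 ^ μ + 2 + k) ∣
      (σ * addMonomial (coeff (2 ^ μ + 1 + k) (σ.val - τ.val)) k).val -
        (addMonomial (coeff (2 ^ μ + 1 + k) (σ.val - τ.val)) k * τ).val := by
  set c := coeff (2 ^ μ + 1 + k) (σ.val - τ.val)
  have hφ := X_pow_dvd_addMonomial_sub_X c k
  set φ := addMonomial c k
  have hσφ : (σ * φ).val = φ.val + (σ.val - X).subst φ.val := by
    rw [val_mul, subst_sub φ.hasSubst, subst_X φ.hasSubst]; ring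
  have hφτ : (φ * τ).val = τ.val + C c * τ.val ^ (k + 2) := by
    simp only [val_mul, φ, addMonomial, subst_add τ.hasSubst, subst_mul τ.hasSubst,
      subst_pow τ.hasSubst, subst_X τ.hasSubst, subst_C]
    rfl
  have key : (σ * φ).val - (φ * τ).val =
      ((σ.val - X).subst φ.val - (σ.val - X).subst X) +
        (σ.val - τ.val - C c * X ^ (2 ^ μ + 1 + k)) -
          C c * (τ.val ^ (k + 2) - X ^ (k + 2) - X ^ (k + 1 + 2 ^ μ)) := by
    rw [hσφ, hφτ, X_subst, show k + 1 + 2 ^ μ = 2 ^ μ + 1 + k by ring]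
    simp only [φ, addMonomial]
    ring
  rw [key]
  refine dvd_sub (dvd_add ?_ ?_) (dvd_mul_of_dvd_right ?_ _)
  · rw [show 2 ^ μ + 2 + k = k + 2 + 2 ^ μ by ring]
    exact X_pow_dvd_subst_sub_subst_of_X_pow_dvd φ.constantCoeff_val constantCoeff_X hμ
      (by omega) (X_pow_dvd_val_sub_X_of_X_pow_dvd_val_sub_val hτX (by omega) hστ) hφ
  · rw [show 2 ^ μ + 2 + k = 2 ^ μ + 1 + k + 1 by ring]
    exact X_pow_succ_dvd_sub_C_coeff_mul hστ
  · rw [show 2 ^ μ + 2 + k = k + 2 + 2 ^ μ by ring]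
    exact X_pow_dvd_pow_sub_pow_sub_X_pow τ.constantCoeff_val
      (Nat.pow_le_pow_right (n := 2) two_pos hμ) hτX hk

theorem exists_X_pow_dvd_val_conj_sub (hμ : 1 ≤ μ) {σ τ : Nottingham R} (hσ : σ * σ = 1)
    (hτ : τ * τ = 1) (hτX : X ^ (2 ^ μ + 1) ∣ τ.val - X - X ^ 2 ^ μ) (k : ℕ)
    (hστ : X ^ (2 ^ μ + 1 + k) ∣ σ.val - τ.val) :
    ∃ φ : Nottingham R, X ^ (k + 2) ∣ φ.val - X ∧
      X ^ (2 ^ μ + 2 + k) ∣ (φ⁻¹ * σ * φ).val - τ.val := by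
  have hp2 : 2 ≤ 2 ^ μ := Nat.pow_le_pow_right (n := 2) two_pos hμ
  rcases Nat.even_or_odd k with hk | hk
  · obtain ⟨n, hn⟩ : ∃ n, 2 ^ μ + k = n + 1 := ⟨2 ^ μ + k - 1, by omega⟩
    have hodd : Odd n := by
      obtain ⟨a, ha⟩ := (Nat.even_pow.mpr ⟨even_two, by omega⟩ : Even (2 ^ μ)).add hk
      exact ⟨a - 1, by omega⟩
    refine ⟨1, by simp, ?_⟩
    simpa [show 2 ^ μ + 2 + k = n + 3 by omega] using
      X_pow_succ_dvd_val_sub_val_of_odd hμ hσ hτ hτX hodd (by omega)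
        (show X ^ (n + 2) ∣ σ.val - τ.val by rwa [show n + 2 = 2 ^ μ + 1 + k by omega])
  · set φ := addMonomial (coeff (2 ^ μ + 1 + k) (σ.val - τ.val)) k
    refine ⟨φ, X_pow_dvd_addMonomial_sub_X _ k, ?_⟩
    rw [mul_assoc, ← inv_mul_cancel_left φ τ, val_mul, val_mul (φ⁻¹)]
    exact X_pow_dvd_subst_sub_subst (σ * φ).constantCoeff_val (φ * τ).constantCoeff_val
      (X_pow_dvd_val_mul_addMonomial_sub hμ hτX hk hστ) _

theorem exists_seq_X_pow_dvd_val_conj_sub (hμ : 1 ≤ μ) {σ τ : Nottingham R} (hσ : σ * σ = 1)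
    (hτ : τ * τ = 1) (hσX : X ^ (2 ^ μ + 1) ∣ σ.val - X - X ^ 2 ^ μ)
    (hτX : X ^ (2 ^ μ + 1) ∣ τ.val - X - X ^ 2 ^ μ) :
    ∃ ψ : ℕ → Nottingham R, ∀ k, X ^ (2 ^ μ + 1 + k) ∣ ((ψ k)⁻¹ * σ * ψ k).val - τ.val ∧
      X ^ (k + 1) ∣ (ψ (k + 1)).val - (ψ k).val := by
  have step : ∀ k (ψ : Nottingham R), X ^ (2 ^ μ + 1 + k) ∣ (ψ⁻¹ * σ * ψ).val - τ.val →
      ∃ φ : Nottingham R, X ^ (k + 2) ∣ φ.val - X ∧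
        X ^ (2 ^ μ + 1 + (k + 1)) ∣ ((ψ * φ)⁻¹ * σ * (ψ * φ)).val - τ.val := by
    intro k ψ hψ
    have hconj : (ψ⁻¹ * σ * ψ) * (ψ⁻¹ * σ * ψ) = 1 := by
      rw [show (ψ⁻¹ * σ * ψ) * (ψ⁻¹ * σ * ψ) = ψ⁻¹ * (σ * σ) * ψ by group, hσ]; group
    obtain ⟨φ, hφ, hφconj⟩ := exists_X_pow_dvd_val_conj_sub hμ hconj hτ hτX k hψ
    refine ⟨φ, hφ, ?_⟩
    rwa [show (ψ * φ)⁻¹ * σ * (ψ * φ) = φ⁻¹ * (ψ⁻¹ * σ * ψ) * φ by group,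
      show 2 ^ μ + 1 + (k + 1) = 2 ^ μ + 2 + k by ring]
  choose! φ hφ using step
  let ψ : ℕ → Nottingham R := fun k => Nat.rec 1 (fun k ψ => ψ * φ k ψ) k
  have hψ : ∀ k, X ^ (2 ^ μ + 1 + k) ∣ ((ψ k)⁻¹ * σ * ψ k).val - τ.val := by
    intro k
    induction k with
    | zero => simpa [ψ] using dvd_sub hσX hτX
    | succ k ih => exact (hφ k (ψ k) ih).2
  refine ⟨ψ, fun k => ⟨hψ k, ?_⟩⟩
  have := X_pow_dvd_subst_sub_subst (φ k (ψ k)).constantCoeff_val constantCoeff_X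
    (hφ k (ψ k) (hψ k)).1 (ψ k).val
  rw [X_subst] at this
  exact (pow_dvd_pow X (Nat.le_succ _)).trans this

theorem isConj_of_mul_self_eq_one (hμ : 1 ≤ μ) {σ τ : Nottingham R} (hσ : σ * σ = 1)
    (hτ : τ * τ = 1) (hσX : X ^ (2 ^ μ + 1) ∣ σ.val - X - X ^ 2 ^ μ)
    (hτX : X ^ (2 ^ μ + 1) ∣ τ.val - X - X ^ 2 ^ μ) : IsConj σ τ := by
  obtain ⟨ψ, hψ⟩ := exists_seq_X_pow_dvd_val_conj_sub hμ hσ hτ hσX hτX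
  obtain ⟨f, hf⟩ := exists_X_pow_dvd_sub_of_forall (g := fun k => (ψ k).val) fun k => (hψ k).2
  have hcoeff : ∀ k, coeff k f = coeff k (ψ k).val := fun k => by
    rw [← sub_eq_zero, ← map_sub]; exact X_pow_dvd_iff.mp (hf k) k k.lt_succ_self
  let Ψ : Nottingham R := ⟨f, by
    rw [← coeff_zero_eq_constantCoeff_apply, hcoeff, coeff_zero_eq_constantCoeff_apply,
      constantCoeff_val], by rw [hcoeff, coeff_one_val]⟩
  have hΨ : σ * Ψ = Ψ * τ := by
    refine Nottingham.ext (eq_of_forall_X_pow_dvd_sub fun N =>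
      (pow_dvd_pow X N.le_succ).trans ?_)
    have hleft := X_pow_dvd_subst_sub_subst Ψ.constantCoeff_val (ψ N).constantCoeff_val
      (hf N) σ.val
    have hmid : X ^ (N + 1) ∣ (ψ N).val.subst ((ψ N)⁻¹ * σ * ψ N).val - (ψ N).val.subst τ.val :=
      (pow_dvd_pow X (by have := Nat.one_le_two_pow (n := μ); omega)).trans
        (X_pow_dvd_subst_sub_subst ((ψ N)⁻¹ * σ * ψ N).constantCoeff_val τ.constantCoeff_val
          (hψ N).1 _)
    have hright := X_pow_dvd_subst τ.constantCoeff_val (hf N)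
    rw [← val_mul, show ψ N * ((ψ N)⁻¹ * σ * ψ N) = σ * ψ N by group, val_mul] at hmid
    rw [subst_sub τ.hasSubst] at hright
    convert dvd_sub (dvd_add hleft hmid) hright using 1
    simp only [val_mul]
    ring
  exact isConj_iff.mpr ⟨Ψ⁻¹, by rw [inv_inv, mul_assoc, hΨ, inv_mul_cancel_left]⟩

end Nottingham

theorem ngComp_eq_subst (σ : F2⟦X⟧) {τ : F2⟦X⟧} (hτ : constantCoeff τ = 0) :
    ngComp σ τ = σ.subst τ := by
  ext k
  rw [coeff_subst_eq_sum hτ]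
  exact coeff_mk _ _

theorem IsNott.constantCoeff_eq_zero {σ : F2⟦X⟧} (h : IsNott σ) : constantCoeff σ = 0 := by
  rw [← coeff_zero_eq_constantCoeff_apply]; exact h.1

def IsNott.toNottingham {σ : F2⟦X⟧} (h : IsNott σ) : Nottingham F2 :=
  ⟨σ, h.constantCoeff_eq_zero, h.2⟩

theorem IsNott.toNottingham_mul_self {σ : F2⟦X⟧} (h : IsNott σ) (hσσ : ngComp σ σ = X) :
    h.toNottingham * h.toNottingham = 1 :=
  Nottingham.ext ((ngComp_eq_subst σ h.constantCoeff_eq_zero).symm.trans hσσ)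

theorem HasDepth.X_pow_dvd {σ : F2⟦X⟧} {m : ℕ} (h : HasDepth σ m) :
    X ^ (m + 2) ∣ σ - X - X ^ (m + 1) := by
  have hlead : coeff (m + 1) (σ - X) = 1 := by
    have := h.2
    generalize coeff (m + 1) (σ - X) = a at this ⊢
    fin_cases a
    exacts [absurd rfl this, rfl]
  simpa [hlead] using X_pow_succ_dvd_sub_C_coeff_mul (X_pow_dvd_iff.mpr h.1)

theorem ngConj_of_hasDepth {μ m : ℕ} (hμ : 1 ≤ μ) (hm : m + 1 = 2 ^ μ) {σ τ : F2⟦X⟧}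
    (hσ : IsNott σ) (hτ : IsNott τ) (hσσ : ngComp σ σ = X) (hττ : ngComp τ τ = X)
    (hσm : HasDepth σ m) (hτm : HasDepth τ m) : NGConj σ τ := by
  have hdepth {υ : F2⟦X⟧} (h : HasDepth υ m) : X ^ (2 ^ μ + 1) ∣ υ - X - X ^ 2 ^ μ := by
    simpa [← hm] using h.X_pow_dvd
  obtain ⟨c, hc⟩ := isConj_iff.mp (Nottingham.isConj_of_mul_self_eq_one hμ
    (hσ.toNottingham_mul_self hσσ) (hτ.toNottingham_mul_self hττ) (hdepth hσm) (hdepth hτm))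
  refine ⟨c⁻¹.val, ⟨by rw [coeff_zero_eq_constantCoeff_apply]; exact c⁻¹.constantCoeff_val,
    c⁻¹.coeff_one_val⟩, ?_⟩
  have hconj : hσ.toNottingham * c⁻¹ = c⁻¹ * hτ.toNottingham := by rw [← hc]; group
  rw [ngComp_eq_subst _ c⁻¹.constantCoeff_val, ngComp_eq_subst _ hτ.constantCoeff_eq_zero]
  exact congrArg Nottingham.val hconj

/-- For `q = (m + 1) / 2`, `sparseExponent q j` is the exponent `e_{j+1}` of `σ_{S,m}`. -/
def sparseExponent (q : ℕ) : ℕ → ℕ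
  | 0 => 2 * q
  | j + 1 => q * (sparseExponent q j + 1)

namespace sparseExponent

variable {q : ℕ}

theorem two_mul_le (hq : 1 ≤ q) (j : ℕ) : 2 * q ≤ sparseExponent q j := by
  induction j with
  | zero => exact le_rfl
  | succ j ih =>
    have : sparseExponent q j + 1 ≤ q * (sparseExponent q j + 1) := Nat.le_mul_of_pos_left _ hq
    exact (Nat.le_succ_of_le ih).trans this

theorem two_pow_le (hq : 2 ≤ q) (j : ℕ) : 2 ^ (j + 2) ≤ sparseExponent q j := by
  induction j with
  | zero => simp [sparseExponent]; omega
  | succ j ih =>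
    calc 2 ^ (j + 3) = 2 * 2 ^ (j + 2) := by ring
      _ ≤ q * (sparseExponent q j + 1) := Nat.mul_le_mul hq (by omega)

theorem cast_eq {m : ℕ} (hm : m + 1 = 2 * q) (hq : 2 ≤ q) (j : ℕ) :
    ((m : ℚ) + 1) / ((m : ℚ) - 1) * ((m : ℚ) * (((m : ℚ) + 1) / 2) ^ j - 1) =
      sparseExponent q j := by
  have hmq : (m : ℚ) = 2 * q - 1 := by
    rw [eq_sub_iff_add_eq]; exact_mod_cast hm
  have hq2 : (2 : ℚ) ≤ q := by exact_mod_cast hq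
  have hq1 : (q : ℚ) - 1 ≠ 0 := by linarith
  rw [hmq, show (2 * (q : ℚ) - 1 + 1) / 2 = q by ring,
    show (2 * (q : ℚ) - 1 + 1) / (2 * q - 1 - 1) = q / (q - 1) by
      rw [div_eq_div_iff (by linarith) hq1]; ring]
  induction j with
  | zero => simp [sparseExponent]; field_simp; ring
  | succ j ih =>
    rw [sparseExponent, Nat.cast_mul, Nat.cast_succ, ← ih]
    field_simp
    ring

end sparseExponent

noncomputable def sparseTail (q : ℕ) : F2⟦X⟧ :=
  mk (Set.indicator (Set.range (sparseExponent q)) 1)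

namespace sparseTail

variable {q : ℕ}

theorem coeff_eq (n : ℕ) :
    coeff n (sparseTail q) = Set.indicator (Set.range (sparseExponent q)) 1 n :=
  coeff_mk _ _

theorem coeff_eq_zero_of_lt (hq : 1 ≤ q) {n : ℕ} (hn : n < 2 * q) :
    coeff n (sparseTail q) = 0 := by
  refine (coeff_eq n).trans (Set.indicator_of_notMem ?_ _)
  rintro ⟨j, rfl⟩
  exact absurd (sparseExponent.two_mul_le hq j) (not_le.mpr hn)

theorem coeff_two_mul : coeff (2 * q) (sparseTail q) = 1 :=
  (coeff_eq _).trans (Set.indicator_of_mem (Set.mem_range_self 0) _)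

theorem constantCoeff_eq_zero (hq : 1 ≤ q) : constantCoeff (sparseTail q) = 0 := by
  rw [← coeff_zero_eq_constantCoeff_apply, coeff_eq_zero_of_lt hq (by omega)]

theorem eq_X_pow_add_pow {ν : ℕ} (hq : q = 2 ^ ν) (hq2 : 2 ≤ q) :
    sparseTail q = X ^ (2 * q) + (X * sparseTail q) ^ q := by
  have hfrob : (X * sparseTail q) ^ q = expand q (by omega) (X * sparseTail q) := by
    subst hq; exact pow_prime_pow_eq_expand _ ν
  ext n
  rw [map_add, coeff_X_pow, hfrob, coeff_expand, coeff_eq]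
  by_cases hE : n ∈ Set.range (sparseExponent q)
  · rw [Set.indicator_of_mem hE, Pi.one_apply]
    obtain ⟨j | j, rfl⟩ := hE
    · rw [show sparseExponent q 0 = 2 * q from rfl, if_pos rfl, if_pos (dvd_mul_left q 2),
        Nat.mul_div_cancel _ (by omega), coeff_succ_X_mul,
        coeff_eq_zero_of_lt (by omega) (by omega), add_zero]
    · have hlarge := sparseExponent.two_mul_le (q := q) (by omega) j
      have hne : sparseExponent q (j + 1) ≠ 2 * q := by
        rw [sparseExponent, mul_comm 2 q]
        exact fun h => by have := Nat.eq_of_mul_eq_mul_left (by omega) h; omega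
      rw [if_neg hne, zero_add, sparseExponent, if_pos (dvd_mul_right _ _),
        Nat.mul_div_cancel_left _ (by omega), coeff_succ_X_mul, coeff_eq,
        Set.indicator_of_mem (Set.mem_range_self j), Pi.one_apply]
  · rw [Set.indicator_of_notMem hE, if_neg (fun h => hE ⟨0, h.symm⟩), zero_add]
    split_ifs with hdvd
    · obtain ⟨r | r, rfl⟩ := hdvd
      · simp
      · rw [Nat.mul_div_cancel_left _ (by omega), coeff_succ_X_mul, coeff_eq,
          Set.indicator_of_notMem]
        rintro ⟨j, rfl⟩
        exact hE ⟨j + 1, rfl⟩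
    · rfl

theorem X_add_subst_X_add {ν : ℕ} (hν : 1 ≤ ν) :
    (X + sparseTail (2 ^ ν)).subst (X + sparseTail (2 ^ ν)) = X := by
  have hq2 : 2 ≤ 2 ^ ν := Nat.pow_le_pow_right (n := 2) two_pos hν
  have hFE := eq_X_pow_add_pow rfl hq2
  set S := sparseTail (2 ^ ν)
  set σ : F2⟦X⟧ := X + S
  have hσ0 : constantCoeff σ = 0 := by
    simp [σ, S, constantCoeff_eq_zero (by omega : 1 ≤ 2 ^ ν)]
  have hs := HasSubst.of_constantCoeff_zero' hσ0
  have hT : S.subst σ = σ ^ (2 * 2 ^ ν) + (σ * S.subst σ) ^ 2 ^ ν := by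
    conv_lhs => rw [hFE]
    rw [subst_add hs, subst_pow hs, subst_pow hs, subst_mul hs, subst_X hs]
  have hS : S = σ ^ (2 * 2 ^ ν) + (σ * S) ^ 2 ^ ν := by
    rw [← pow_succ', add_pow_char_pow, show σ * S = X * S + S * S by ring, add_pow_char_pow,
      mul_pow S, ← pow_add, ← two_mul, ← pow_succ']
    linear_combination hFE - S ^ 2 ^ (ν + 1) * (CharTwo.two_eq_zero : (2 : F2⟦X⟧) = 0)
  have hD : S.subst σ - S = σ ^ 2 ^ ν * (S.subst σ - S) ^ 2 ^ ν := by
    calc S.subst σ - S = (σ ^ (2 * 2 ^ ν) + (σ * S.subst σ) ^ 2 ^ ν) -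
          (σ ^ (2 * 2 ^ ν) + (σ * S) ^ 2 ^ ν) := by rw [← hT, ← hS]
      _ = (σ * (S.subst σ - S)) ^ 2 ^ ν := by rw [mul_sub, sub_pow_char_pow]; ring
      _ = σ ^ 2 ^ ν * (S.subst σ - S) ^ 2 ^ ν := mul_pow _ _ _
  have hTS : S.subst σ = S := sub_eq_zero.mp (eq_zero_of_eq_mul_pow
    (dvd_pow (X_dvd_iff.mpr hσ0) (by positivity)) (by positivity) hD)
  rw [subst_add hs, subst_X hs, hTS]
  linear_combination S * (CharTwo.two_eq_zero : (2 : F2⟦X⟧) = 0)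

theorem isNott_X_add (hq : 1 ≤ q) : IsNott (X + sparseTail q) := by
  constructor <;> simp [constantCoeff_eq_zero hq, coeff_eq_zero_of_lt hq (by omega : 1 < 2 * q)]

theorem hasDepth_X_add {m : ℕ} (hm : m + 1 = 2 * q) (hq : 1 ≤ q) :
    HasDepth (X + sparseTail q) m := by
  refine ⟨fun i hi => ?_, ?_⟩ <;> rw [add_sub_cancel_left]
  · exact coeff_eq_zero_of_lt hq (by omega)
  · rw [hm, coeff_two_mul]; exact one_ne_zero

theorem card_support_le (hq : 2 ≤ q) (N : ℕ) :
    ((Finset.range (N + 1)).filter fun k => coeff k (X + sparseTail q) ≠ 0).card ≤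
      1 + Nat.log 2 N := by
  have hsub : ((Finset.range (N + 1)).filter fun k => coeff k (X + sparseTail q) ≠ 0) ⊆
      insert 1 ((Finset.range (Nat.log 2 N)).image (sparseExponent q)) := by
    intro k hk
    rw [Finset.mem_filter, Finset.mem_range] at hk
    rw [Finset.mem_insert, Finset.mem_image]
    by_contra! hnot
    refine hk.2 ?_
    rw [map_add, coeff_X, if_neg hnot.1, zero_add, coeff_eq, Set.indicator_of_notMem]
    rintro ⟨j, rfl⟩
    refine hnot.2 j (Finset.mem_range.mpr ?_) rfl
    have hpow := (sparseExponent.two_pow_le hq j).trans (Nat.lt_succ_iff.mp hk.1)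
    have := (Nat.le_log_iff_pow_le one_lt_two
      (by have := Nat.one_le_two_pow (n := j + 2); omega)).mpr hpow
    omega
  calc _ ≤ _ := Finset.card_le_card hsub
    _ ≤ ((Finset.range (Nat.log 2 N)).image (sparseExponent q)).card + 1 :=
      Finset.card_insert_le _ _
    _ ≤ 1 + Nat.log 2 N := by
      have := Finset.card_image_le (s := Finset.range (Nat.log 2 N)) (f := sparseExponent q)
      rw [Finset.card_range] at this
      omega

theorem isSparse_X_add (hq : 2 ≤ q) : IsSparse 1 (X + sparseTail q) := by
  refine ⟨2 / Real.log 2, by positivity, fun N hN => ?_⟩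
  have hcard : (((Finset.range (N + 1)).filter
      fun k => coeff k (X + sparseTail q) ≠ 0).card : ℝ) ≤ 1 + Nat.log 2 N := by
    exact_mod_cast card_support_le hq N
  have hlog : (1 : ℝ) ≤ Real.logb 2 N := by
    rw [Real.le_logb_iff_rpow_le one_lt_two (by positivity), Real.rpow_one]
    exact_mod_cast hN
  have := Real.natLog_le_logb N 2
  rw [pow_one, div_mul_eq_mul_div, mul_div_assoc, Real.log_div_log]
  push_cast at this
  linarith

end sparseTail

theorem sigmaSm_eq {m q : ℕ} (hm : m + 1 = 2 * q) (hq : 2 ≤ q) :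
    sigmaSm m = X + sparseTail q := by
  ext n
  have hcond : (n = 1 ∨ ∃ k : ℕ, 1 ≤ k ∧ (n : ℚ) = ((m : ℚ) + 1) / ((m : ℚ) - 1) *
      ((m : ℚ) * (((m : ℚ) + 1) / 2) ^ (k - 1) - 1)) ↔
      n = 1 ∨ n ∈ Set.range (sparseExponent q) := by
    refine or_congr Iff.rfl ⟨fun ⟨k, hk, hn⟩ => ⟨k - 1, ?_⟩, fun ⟨j, hj⟩ => ⟨j + 1, by omega, ?_⟩⟩
    · exact_mod_cast (hn.trans (sparseExponent.cast_eq hm hq (k - 1))).symm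
    · rw [Nat.add_sub_cancel, sparseExponent.cast_eq hm hq j, hj]
  rw [sigmaSm, coeff_mk, map_add, coeff_X, sparseTail.coeff_eq]
  by_cases h1 : n = 1
  · rw [if_pos (hcond.mpr (Or.inl h1)), if_pos h1, ← sparseTail.coeff_eq,
      sparseTail.coeff_eq_zero_of_lt (by omega) (by omega), add_zero]
  · rw [if_neg h1, zero_add]
    by_cases hE : n ∈ Set.range (sparseExponent q)
    · rw [if_pos (hcond.mpr (Or.inr hE)), Set.indicator_of_mem hE, Pi.one_apply]
    · rw [if_neg (by rw [hcond]; tauto), Set.indicator_of_notMem hE]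

theorem statement14 (μ m : ℕ) (hμ : 2 ≤ μ) (hm : m = 2 ^ μ - 1) :
    IsNott (sigmaSm m) ∧ ngComp (sigmaSm m) (sigmaSm m) = PowerSeries.X ∧
    sigmaSm m ≠ PowerSeries.X ∧ HasDepth (sigmaSm m) m ∧ IsSparse 1 (sigmaSm m) ∧
    ∀ σ : PowerSeries F2, IsNott σ → ngComp σ σ = PowerSeries.X → σ ≠ PowerSeries.X →
      HasDepth σ m → NGConj σ (sigmaSm m) := by
  obtain ⟨ν, rfl⟩ : ∃ ν, μ = ν + 1 := ⟨μ - 1, by omega⟩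
  have hq : 2 ≤ 2 ^ ν := Nat.pow_le_pow_right (n := 2) two_pos (show 1 ≤ ν by omega)
  have hm' : m + 1 = 2 * 2 ^ ν := by rw [hm, pow_succ']; omega
  have hnott := sparseTail.isNott_X_add (q := 2 ^ ν) (by omega)
  have hdepth := sparseTail.hasDepth_X_add hm' (by omega)
  have hinv : ngComp (X + sparseTail (2 ^ ν)) (X + sparseTail (2 ^ ν)) = X := by
    rw [ngComp_eq_subst _ hnott.constantCoeff_eq_zero]
    exact sparseTail.X_add_subst_X_add (by omega)
  rw [sigmaSm_eq hm' hq]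
  exact ⟨hnott, hinv, fun h => hdepth.2 (by rw [h, sub_self, map_zero]), hdepth,
    sparseTail.isSparse_X_add hq, fun σ hσ hσσ _ hσm =>
      ngConj_of_hasDepth (by omega) (hm'.trans (pow_succ' 2 ν).symm) hσ hnott hσσ hinv hσm hdepth⟩
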